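/- arXiv:2201.09238 — 2 statements merged into one kernel-verified Lean document; each statement's English description precedes it below -/
import Mathlib

section
/- Let d ≥ 1, q ≥ 1 and 0 < α < d. Then there exists a constant C = C(d, q, α) > 0 such that for every measurable function u : ℝ^d → ℂ and every point a ∈ ℝ^d, ∫_0^∞ ( ⨍_{B_ρ(a)} |u(y)| dy )^q ρ^{(d − α)q + d − 1} dρ ≤ C ‖ |x|^{−α} ⋆ |u| ‖_{L^q(ℝ^d)}^q, where ⨍_{B_ρ(a)} |u(y)| dy denotes the average of |u| over the ball of radius ρ centered at a. -/
open MeasureTheory Filter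
open scoped ENNReal FourierTransform

noncomputable section

abbrev Ed (d : ℕ) : Type := EuclideanSpace ℝ (Fin d)

/-- A function on `ℝ^d` is radial if its value depends only on the norm. -/
def IsRadial {d : ℕ} (f : Ed d → ℂ) : Prop :=
  ∀ x y : Ed d, ‖x‖ = ‖y‖ → f x = f y

/-- `F` is (a function representative of) the Fourier transform of `f`, in the sense of
tempered distributions: pairing `F` against any Schwartz function `g` agrees with pairing
`f` against the Fourier transform of `g` (and all pairings are given by convergent
integrals). -/
def IsFourierPair {d : ℕ} (f F : Ed d → ℂ) : Prop :=
  ∀ g : SchwartzMap (Ed d) ℂ,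
    Integrable (fun x : Ed d => f x * 𝓕 (fun y : Ed d => g y) x) volume ∧
    Integrable (fun x : Ed d => F x * g x) volume ∧
    ∫ x : Ed d, F x * g x = ∫ x : Ed d, f x * 𝓕 (fun y : Ed d => g y) x

/-- `u = D^s f`, i.e. the (distributional) Fourier transform of `u` is
`‖ξ‖ ^ s` times the Fourier transform of `f`. -/
def IsDpow {d : ℕ} (s : ℝ) (f u : Ed d → ℂ) : Prop :=
  ∃ F : Ed d → ℂ,
    IsFourierPair f F ∧ IsFourierPair u (fun ξ : Ed d => ((‖ξ‖ ^ s : ℝ) : ℂ) * F ξ)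

/-- A complex-valued function is (a.e.) nonnegative real. -/
def AENonneg {d : ℕ} (u : Ed d → ℂ) : Prop :=
  ∀ᵐ x : Ed d ∂volume, 0 ≤ (u x).re ∧ (u x).im = 0

/-- The Riesz-type convolution `(|x|^{-α} ⋆ |u|)(x)`. -/
def rieszConv {d : ℕ} (α : ℝ) (u : Ed d → ℂ) (x : Ed d) : ℝ≥0∞ :=
  ∫⁻ y : Ed d, (‖u y‖₊ : ℝ≥0∞) / ENNReal.ofReal (‖x - y‖ ^ α)

/-- The `L^q` norm of the Riesz-type convolution `|x|^{-α} ⋆ |u|`. -/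
def rieszNorm {d : ℕ} (α q : ℝ) (u : Ed d → ℂ) : ℝ≥0∞ :=
  (∫⁻ x : Ed d, rieszConv α u x ^ q) ^ (1 / q)

/-- The homogeneous Sobolev norm `‖D^s f‖_{L²}` computed on the Fourier side (Plancherel):
`(∫ ‖ξ‖^{2s} ‖F ξ‖² dξ)^{1/2}` where `F = 𝓕 f`. -/
def fracNorm {d : ℕ} (s : ℝ) (F : Ed d → ℂ) : ℝ≥0∞ :=
  (∫⁻ ξ : Ed d, ENNReal.ofReal (‖ξ‖ ^ (2 * s)) * (‖F ξ‖₊ : ℝ≥0∞) ^ (2 : ℝ)) ^ (1 / (2 : ℝ))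

/-!
For `x` in the annulus `ρ < |x - a| < 2ρ` every `y ∈ B_ρ(a)` satisfies `|x - y| ≤ 3ρ`, so
`(|·|^{-α} ⋆ |u|)(x) ≥ (3ρ)^{-α} ∫_{B_ρ(a)} |u|`. Raising to the power `q` and integrating over
the annulus, whose volume is at least `|B_ρ(a)|`, bounds the integrand of the left-hand side at
`ρ` by `C ρ⁻¹ ∫_{annulus} (|·|^{-α} ⋆ |u|)^q`. Every `x` lies in the annulus of radius `ρ` only for
`ρ ∈ (|x - a|/2, |x - a|)`, where `∫ dρ/ρ = log 2 ≤ 1`, so Tonelli finishes the proof.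
-/

open Metric Set

section Annulus

variable {E : Type*} [PseudoMetricSpace E]

def annulus (a : E) (r R : ℝ) : Set E := ball a R \ closedBall a r

lemma mem_annulus {a x : E} {r R : ℝ} : x ∈ annulus a r R ↔ r < dist x a ∧ dist x a < R := by
  simp [annulus, and_comm]

lemma measurableSet_annulus [MeasurableSpace E] [OpensMeasurableSpace E] (a : E) (r R : ℝ) :
    MeasurableSet (annulus a r R) :=
  measurableSet_ball.diff measurableSet_closedBall

lemma setLIntegral_Ioo_half_inv_le_one (r : ℝ) :
    ∫⁻ ρ in Ioo (r / 2) r, ENNReal.ofReal ρ⁻¹ ≤ 1 := by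
  rcases le_or_gt r 0 with hr | hr
  · simp [Ioo_eq_empty (by linarith : ¬ r / 2 < r)]
  calc ∫⁻ ρ in Ioo (r / 2) r, ENNReal.ofReal ρ⁻¹
      ≤ ∫⁻ _ in Ioo (r / 2) r, ENNReal.ofReal (r / 2)⁻¹ :=
        setLIntegral_mono' measurableSet_Ioo fun ρ hρ =>
          ENNReal.ofReal_le_ofReal (inv_anti₀ (by positivity) hρ.1.le)
    _ = ENNReal.ofReal ((r / 2)⁻¹ * (r - r / 2)) := by
        rw [setLIntegral_const, Real.volume_Ioo, ← ENNReal.ofReal_mul (by positivity)]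
    _ = 1 := by rw [show (r / 2)⁻¹ * (r - r / 2) = 1 by field_simp; ring, ENNReal.ofReal_one]

lemma lintegral_inv_mul_setLIntegral_annulus_le [MeasurableSpace E] [OpensMeasurableSpace E]
    (μ : Measure E) [SFinite μ] {f : E → ℝ≥0∞} (hf : Measurable f) (a : E) :
    ∫⁻ ρ in Ioi 0, ENNReal.ofReal ρ⁻¹ * ∫⁻ x in annulus a ρ (2 * ρ), f x ∂μ ≤ ∫⁻ x, f x ∂μ := by
  set T : Set (ℝ × E) := {p | p.1 < dist p.2 a ∧ dist p.2 a < 2 * p.1}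
  set g : ℝ × E → ℝ≥0∞ := T.indicator fun p => ENNReal.ofReal p.1⁻¹ * f p.2
  have hg : Measurable g := by
    have hdist : Measurable fun p : ℝ × E => dist p.2 a :=
      (continuous_snd.dist continuous_const).measurable
    exact ((ENNReal.measurable_ofReal.comp measurable_fst.inv).mul
      (hf.comp measurable_snd)).indicator ((measurableSet_lt measurable_fst hdist).inter
        (measurableSet_lt hdist (measurable_fst.const_mul 2)))
  have hslice_ρ (ρ : ℝ) : ENNReal.ofReal ρ⁻¹ * ∫⁻ x in annulus a ρ (2 * ρ), f x ∂μ =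
      ∫⁻ x, g (ρ, x) ∂μ := by
    rw [← lintegral_const_mul' _ _ ENNReal.ofReal_ne_top,
      ← lintegral_indicator (measurableSet_annulus a _ _)]
    congr 1 with x
    by_cases hx : x ∈ annulus a ρ (2 * ρ) <;>
      simp_all [g, T, indicator, mem_annulus]
  have hslice_x (x : E) : ∫⁻ ρ, g (ρ, x) =
      (∫⁻ ρ in Ioo (dist x a / 2) (dist x a), ENNReal.ofReal ρ⁻¹) * f x := by
    rw [← lintegral_mul_const _ (by fun_prop), ← lintegral_indicator measurableSet_Ioo]
    congr 1 with ρ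
    by_cases hρ : ρ ∈ Ioo (dist x a / 2) (dist x a)
    · have : (ρ, x) ∈ T := ⟨hρ.2, by linarith [hρ.1]⟩
      simp [g, indicator_of_mem this, indicator_of_mem hρ]
    · have : (ρ, x) ∉ T := fun h => hρ ⟨by linarith [h.2], h.1⟩
      simp [g, indicator_of_notMem this, indicator_of_notMem hρ]
  calc ∫⁻ ρ in Ioi 0, ENNReal.ofReal ρ⁻¹ * ∫⁻ x in annulus a ρ (2 * ρ), f x ∂μ
      ≤ ∫⁻ ρ, ∫⁻ x, g (ρ, x) ∂μ := by
        simp only [hslice_ρ]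
        exact setLIntegral_le_lintegral _ _
    _ = ∫⁻ x, (∫⁻ ρ, g (ρ, x)) ∂μ :=
        lintegral_lintegral_swap (f := fun ρ x => g (ρ, x)) hg.aemeasurable
    _ ≤ ∫⁻ x, f x ∂μ := by
        refine lintegral_mono fun x => ?_
        rw [hslice_x]
        exact mul_le_of_le_one_left' (setLIntegral_Ioo_half_inv_le_one _)

end Annulus

lemma measure_ball_le_measure_annulus {E : Type*} [NormedAddCommGroup E] [NormedSpace ℝ E]
    [FiniteDimensional ℝ E] [MeasurableSpace E] [BorelSpace E] (μ : Measure E)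
    [μ.IsAddHaarMeasure] (hE : 0 < Module.finrank ℝ E) (a : E) {ρ : ℝ}
    (hρ : 0 < ρ) : μ (ball a ρ) ≤ μ (annulus a ρ (2 * ρ)) := by
  have hball : μ (closedBall a ρ) = μ (ball a ρ) := by
    rw [Measure.addHaar_closedBall μ a hρ.le, Measure.addHaar_ball_of_pos μ a hρ]
  have hdouble : 2 * μ (ball a ρ) ≤ μ (ball a (2 * ρ)) := by
    rw [Measure.addHaar_ball_mul_of_pos μ a two_pos, Measure.addHaar_ball_center μ a]
    gcongr
    rw [← ENNReal.ofReal_ofNat]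
    exact ENNReal.ofReal_le_ofReal (le_self_pow₀ one_le_two hE.ne')
  rw [annulus, measure_sdiff (closedBall_subset_ball (by linarith))
    measurableSet_closedBall.nullMeasurableSet measure_closedBall_lt_top.ne, hball]
  exact ENNReal.le_sub_of_add_le_left measure_ball_lt_top.ne (by rwa [← two_mul])

-- All powers of `ρ` cancel except `ρ⁻¹`: this is what the weight `ρ^{(d - α) q + d - 1}` is for.
lemma rpow_scaling_identity (d : ℕ) {q α t ρ : ℝ} (ht : 0 < t) (hρ : 0 < ρ) :
    ((ρ ^ d * t)⁻¹) ^ q * ρ ^ (((d : ℝ) - α) * q + d - 1) * (ρ ^ d * t)⁻¹ * ((3 * ρ) ^ α) ^ q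
      = 3 ^ (α * q) * t⁻¹ ^ q * t⁻¹ * ρ⁻¹ := by
  have h1 : ((ρ ^ d * t)⁻¹) ^ q = (ρ ^ ((d : ℝ) * q))⁻¹ * t⁻¹ ^ q := by
    rw [mul_inv, Real.mul_rpow (by positivity) (by positivity), Real.inv_rpow (by positivity),
      ← Real.rpow_natCast, ← Real.rpow_mul hρ.le]
  have h2 : ((3 * ρ) ^ α) ^ q = 3 ^ (α * q) * ρ ^ (α * q) := by
    rw [← Real.rpow_mul (by positivity), Real.mul_rpow (by norm_num) hρ.le]
  have h3 : ρ ^ (((d : ℝ) - α) * q + d - 1) * ρ ^ (α * q) = ρ ^ ((d : ℝ) * q) * ρ ^ d * ρ⁻¹ := by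
    rw [← Real.rpow_add hρ, ← Real.rpow_natCast, ← Real.rpow_neg_one, ← Real.rpow_add hρ,
      ← Real.rpow_add hρ]
    ring_nf
  rw [h1, h2]
  calc _ = 3 ^ (α * q) * t⁻¹ ^ q * t⁻¹ * (ρ ^ ((d : ℝ) * q))⁻¹ * (ρ ^ d)⁻¹ *
        (ρ ^ (((d : ℝ) - α) * q + d - 1) * ρ ^ (α * q)) := by ring
    _ = _ := by
      rw [h3]
      field_simp

def unitBallVolume (d : ℕ) : ℝ := (volume (ball (0 : Ed d) 1)).toReal

lemma unitBallVolume_pos (d : ℕ) : 0 < unitBallVolume d :=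
  ENNReal.toReal_pos (measure_ball_pos _ _ one_pos).ne' measure_ball_lt_top.ne

lemma volume_ball_eq {d : ℕ} (a : Ed d) {ρ : ℝ} (hρ : 0 < ρ) :
    volume (ball a ρ) = ENNReal.ofReal (ρ ^ d * unitBallVolume d) := by
  rw [Measure.addHaar_ball_of_pos volume a hρ, finrank_euclideanSpace_fin, unitBallVolume,
    ENNReal.ofReal_mul (by positivity), ENNReal.ofReal_toReal measure_ball_lt_top.ne]

def rieszBallConst (d : ℕ) (q α : ℝ) : ℝ :=
  3 ^ (α * q) * (unitBallVolume d)⁻¹ ^ q * (unitBallVolume d)⁻¹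

lemma rieszBallConst_pos (d : ℕ) (q α : ℝ) : 0 < rieszBallConst d q α := by
  have := unitBallVolume_pos d
  unfold rieszBallConst
  positivity

lemma measurable_rieszConv {d : ℕ} {α : ℝ} (hα : 0 ≤ α) {u : Ed d → ℂ} (hu : Measurable u) :
    Measurable (rieszConv α u) := by
  refine Measurable.lintegral_prod_right' (f := fun p : Ed d × Ed d =>
    (‖u p.2‖₊ : ℝ≥0∞) / ENNReal.ofReal (‖p.1 - p.2‖ ^ α)) ?_
  exact (hu.comp measurable_snd).nnnorm.coe_nnreal_ennreal.div
    (ENNReal.measurable_ofReal.comp ((continuous_fst.sub continuous_snd).norm.rpow_const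
      fun _ => Or.inr hα).measurable)

lemma lintegral_ball_le_mul_rieszConv {d : ℕ} {α ρ : ℝ} (hα : 0 ≤ α) (hρ : 0 < ρ)
    (u : Ed d → ℂ) {a x : Ed d} (hx : dist x a ≤ 2 * ρ) :
    ∫⁻ y in ball a ρ, (‖u y‖₊ : ℝ≥0∞) ≤ ENNReal.ofReal ((3 * ρ) ^ α) * rieszConv α u x := by
  set c := ENNReal.ofReal ((3 * ρ) ^ α)
  have hc : c ≠ 0 := (ENNReal.ofReal_pos.2 (by positivity)).ne'
  calc ∫⁻ y in ball a ρ, (‖u y‖₊ : ℝ≥0∞)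
      ≤ ∫⁻ y in ball a ρ, c * ((‖u y‖₊ : ℝ≥0∞) / ENNReal.ofReal (‖x - y‖ ^ α)) := by
        refine setLIntegral_mono' measurableSet_ball fun y hy => ?_
        have hxy : ‖x - y‖ ≤ 3 * ρ := by
          rw [← dist_eq_norm]
          linarith [dist_triangle_right x y a, mem_ball.1 hy]
        calc (‖u y‖₊ : ℝ≥0∞) = c * (‖u y‖₊ / c) :=
              (ENNReal.mul_div_cancel hc ENNReal.ofReal_ne_top).symm
          _ ≤ _ := by
            gcongr
            exact ENNReal.ofReal_le_ofReal (Real.rpow_le_rpow (norm_nonneg _) hxy hα)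
    _ = c * ∫⁻ y in ball a ρ, (‖u y‖₊ : ℝ≥0∞) / ENNReal.ofReal (‖x - y‖ ^ α) :=
        lintegral_const_mul' _ _ ENNReal.ofReal_ne_top
    _ ≤ c * rieszConv α u x := by
        gcongr
        exact setLIntegral_le_lintegral _ _

lemma ballAverage_rpow_mul_le {d : ℕ} (hd : 1 ≤ d) {q α ρ : ℝ} (hq : 0 < q) (hα : 0 ≤ α)
    (hρ : 0 < ρ) (u : Ed d → ℂ) (a : Ed d) :
    ((volume (ball a ρ))⁻¹ * ∫⁻ y in ball a ρ, (‖u y‖₊ : ℝ≥0∞)) ^ q *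
        ENNReal.ofReal (ρ ^ (((d : ℝ) - α) * q + (d : ℝ) - 1)) ≤
      ENNReal.ofReal (rieszBallConst d q α) *
        (ENNReal.ofReal ρ⁻¹ * ∫⁻ x in annulus a ρ (2 * ρ), rieszConv α u x ^ q) := by
  set M := ∫⁻ y in ball a ρ, (‖u y‖₊ : ℝ≥0∞)
  set m := volume (ball a ρ)
  set c := ENNReal.ofReal ((3 * ρ) ^ α)
  set e := ENNReal.ofReal (ρ ^ (((d : ℝ) - α) * q + (d : ℝ) - 1))
  have hMm : M ^ q * m ≤ c ^ q * ∫⁻ x in annulus a ρ (2 * ρ), rieszConv α u x ^ q :=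
    calc M ^ q * m ≤ M ^ q * volume (annulus a ρ (2 * ρ)) := by
          gcongr
          exact measure_ball_le_measure_annulus volume (by rwa [finrank_euclideanSpace_fin]) a hρ
      _ = ∫⁻ _ in annulus a ρ (2 * ρ), M ^ q := (setLIntegral_const _ _).symm
      _ ≤ ∫⁻ x in annulus a ρ (2 * ρ), c ^ q * rieszConv α u x ^ q := by
          refine setLIntegral_mono' (measurableSet_annulus _ _ _) fun x hx => ?_
          rw [← ENNReal.mul_rpow_of_nonneg _ _ hq.le]
          gcongr
          exact lintegral_ball_le_mul_rieszConv hα hρ u (mem_annulus.1 hx).2.le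
      _ = _ := lintegral_const_mul' _ _ (ENNReal.rpow_ne_top_of_nonneg hq.le ENNReal.ofReal_ne_top)
  have hconst : m⁻¹ ^ q * e * m⁻¹ * c ^ q =
      ENNReal.ofReal (rieszBallConst d q α) * ENNReal.ofReal ρ⁻¹ := by
    have ht := unitBallVolume_pos d
    rw [show m = _ from volume_ball_eq a hρ, ← ENNReal.ofReal_inv_of_pos (by positivity),
      ENNReal.ofReal_rpow_of_pos (by positivity), ENNReal.ofReal_rpow_of_pos (by positivity),
      ← ENNReal.ofReal_mul (by positivity), ← ENNReal.ofReal_mul (by positivity),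
      ← ENNReal.ofReal_mul (by positivity), ← ENNReal.ofReal_mul (rieszBallConst_pos d q α).le,
      rpow_scaling_identity d ht hρ, rieszBallConst]
  have hm : m⁻¹ * m = 1 :=
    ENNReal.inv_mul_cancel (measure_ball_pos _ _ hρ).ne' measure_ball_lt_top.ne
  calc (m⁻¹ * M) ^ q * e = m⁻¹ ^ q * M ^ q * e * (m⁻¹ * m) := by
        rw [ENNReal.mul_rpow_of_nonneg _ _ hq.le, hm, mul_one]
    _ = m⁻¹ ^ q * e * m⁻¹ * (M ^ q * m) := by ring
    _ ≤ m⁻¹ ^ q * e * m⁻¹ * (c ^ q * ∫⁻ x in annulus a ρ (2 * ρ), rieszConv α u x ^ q) := by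
        gcongr
    _ = _ := by rw [← mul_assoc, hconst, mul_assoc]

theorem statement9_general (d : ℕ) (hd : 1 ≤ d) (q α : ℝ)
    (hq : 1 ≤ q) (hα1 : 0 < α) :
    ∃ C : ℝ, 0 < C ∧
      ∀ u : Ed d → ℂ, Measurable u → ∀ a : Ed d,
        (∫⁻ ρ in Set.Ioi (0 : ℝ),
            ((volume (Metric.ball a ρ))⁻¹ * ∫⁻ y in Metric.ball a ρ, (‖u y‖₊ : ℝ≥0∞)) ^ q *
              ENNReal.ofReal (ρ ^ (((d : ℝ) - α) * q + (d : ℝ) - 1))) ≤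
          ENNReal.ofReal C * rieszNorm α q u ^ q := by
  have hq0 : 0 < q := zero_lt_one.trans_le hq
  refine ⟨rieszBallConst d q α, rieszBallConst_pos d q α, fun u hu a => ?_⟩
  have hF : Measurable fun x => rieszConv α u x ^ q :=
    (measurable_rieszConv hα1.le hu).pow_const q
  calc _ ≤ ∫⁻ ρ in Ioi 0, ENNReal.ofReal (rieszBallConst d q α) *
          (ENNReal.ofReal ρ⁻¹ * ∫⁻ x in annulus a ρ (2 * ρ), rieszConv α u x ^ q) :=
        setLIntegral_mono' measurableSet_Ioi fun ρ hρ =>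
          ballAverage_rpow_mul_le hd hq0 hα1.le hρ u a
    _ = ENNReal.ofReal (rieszBallConst d q α) * ∫⁻ ρ in Ioi 0,
          ENNReal.ofReal ρ⁻¹ * ∫⁻ x in annulus a ρ (2 * ρ), rieszConv α u x ^ q :=
        lintegral_const_mul' _ _ ENNReal.ofReal_ne_top
    _ ≤ ENNReal.ofReal (rieszBallConst d q α) * ∫⁻ x, rieszConv α u x ^ q := by
        gcongr
        exact lintegral_inv_mul_setLIntegral_annulus_le volume hF a
    _ = ENNReal.ofReal (rieszBallConst d q α) * rieszNorm α q u ^ q := by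
        rw [rieszNorm, ← ENNReal.rpow_mul, one_div_mul_cancel hq0.ne', ENNReal.rpow_one]

/-- Lemma `lem:important`: bound for averages on balls in terms of the
`L^q` norm of the Riesz potential. -/
theorem statement9 (d : ℕ) (hd : 1 ≤ d) (q α : ℝ)
    (hq : 1 ≤ q) (hα1 : 0 < α) (hα2 : α < (d : ℝ)) :
    ∃ C : ℝ, 0 < C ∧
      ∀ u : Ed d → ℂ, Measurable u → ∀ a : Ed d,
        (∫⁻ ρ in Set.Ioi (0 : ℝ),
            ((volume (Metric.ball a ρ))⁻¹ * ∫⁻ y in Metric.ball a ρ, (‖u y‖₊ : ℝ≥0∞)) ^ q *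
              ENNReal.ofReal (ρ ^ (((d : ℝ) - α) * q + (d : ℝ) - 1))) ≤
          ENNReal.ofReal C * rieszNorm α q u ^ q :=
  statement9_general d hd q α hq hα1

end
end

section
/- Let d ≥ 2, b ∈ (−d + 1, 0) and γ > d − 1. Then there exists a constant C = C(d, b, γ) > 0 such that for every radial function f on ℝ^d with ∫_{ℝ^d} |y|^{b} |f(y)| dy < ∞ and every x ≠ 0, | ∫_{ℝ^d} f(y) (1 + |x − y|^2)^{−γ/2} dy | ≤ C |x|^{−(d − 1 + b)} ∫_{ℝ^d} |y|^{b} |f(y)| dy. -/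
open MeasureTheory Filter
open scoped ENNReal FourierTransform

noncomputable section

/-! The function `Φ x = ∫ |f y| (1 + ‖x - y‖²)^(-γ/2) dy` is radial, so `Φ x` equals its average
over the sphere of radius `R = ‖x‖`, and by Tonelli it suffices to bound the spherical average of
the kernel, `∫_S (1 + ‖R u - y‖²)^(-γ/2) dσ(u)`, by `C R^(-(n-1+b)) ‖y‖^b`. For `‖y‖ ≥ 2R` the
kernel is at most `(‖y‖/2)^(-(n-1))` since `γ ≥ n - 1`. For `‖y‖ ≤ 2R` a dyadic decomposition
around `y`, with the cap estimate `σ {u | ‖R u - y‖ ≤ t} ≲ (t/R)^(n-1)`, bounds the average by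
`C R^(-(n-1))`; this uses `γ > n - 1`. The constraint `-(n-1) ≤ b ≤ 0` turns both bounds into
the required one. -/

open Metric Set Module

lemma one_add_sq_rpow_neg_le_dyadic {γ : ℝ} (hγ : 0 ≤ γ) (s : ℝ) :
    ∃ j : ℕ, s ≤ 2 ^ j ∧ (1 + s ^ 2) ^ (-(γ / 2)) ≤ 2 ^ γ * (2 ^ (-γ)) ^ j := by
  obtain ⟨j, hj, hj'⟩ := exists_nat_pow_near (le_max_left 1 s) one_lt_two
  refine ⟨j + 1, (le_max_right 1 s).trans hj'.le, ?_⟩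
  have hmax : 0 < max 1 s := zero_lt_one.trans_le (le_max_left 1 s)
  calc (1 + s ^ 2) ^ (-(γ / 2)) ≤ (max 1 s ^ 2) ^ (-(γ / 2)) := by
        refine Real.rpow_le_rpow_of_nonpos (by positivity) ?_ (by linarith)
        rcases max_cases 1 s with ⟨h, -⟩ | ⟨h, -⟩ <;> rw [h] <;> nlinarith
    _ = max 1 s ^ (-γ) := by
        rw [← Real.rpow_natCast, ← Real.rpow_mul hmax.le]; ring_nf
    _ ≤ ((2 : ℝ) ^ j) ^ (-γ) := Real.rpow_le_rpow_of_nonpos (by positivity) hj (by linarith)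
    _ = 2 ^ γ * (2 ^ (-γ)) ^ (j + 1) := by
        rw [← Real.rpow_natCast, ← Real.rpow_mul zero_le_two, ← Real.rpow_natCast,
          ← Real.rpow_mul zero_le_two, ← Real.rpow_add two_pos]
        push_cast; ring_nf

lemma rpow_neg_le_mul_rpow_of_le {a b R s : ℝ} (hs : 0 < s) (hsR : s ≤ R) (hb : b ≤ 0) :
    R ^ (-a) ≤ R ^ (-(a + b)) * s ^ b := by
  have hR := hs.trans_le hsR
  calc R ^ (-a) = R ^ (-(a + b)) * R ^ b := by rw [← Real.rpow_add hR]; ring_nf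
    _ ≤ R ^ (-(a + b)) * s ^ b :=
        mul_le_mul_of_nonneg_left (Real.rpow_le_rpow_of_nonpos hs hsR hb) (by positivity)

lemma rpow_neg_le_mul_rpow_of_ge {a b R s : ℝ} (hR : 0 < R) (hRs : R ≤ s) (hab : 0 ≤ a + b) :
    s ^ (-a) ≤ R ^ (-(a + b)) * s ^ b := by
  have hs := hR.trans_le hRs
  calc s ^ (-a) = s ^ (-(a + b)) * s ^ b := by rw [← Real.rpow_add hs]; ring_nf
    _ ≤ R ^ (-(a + b)) * s ^ b := mul_le_mul_of_nonneg_right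
        (Real.rpow_le_rpow_of_nonpos hR hRs (by linarith)) (by positivity)

lemma one_add_sq_rpow_neg_le_rpow_neg {a γ s t : ℝ} (hs : 0 < s) (hst : s ≤ t) (ha : 0 ≤ a)
    (haγ : a ≤ γ) : (1 + t ^ 2) ^ (-(γ / 2)) ≤ s ^ (-a) := by
  calc (1 + t ^ 2) ^ (-(γ / 2)) ≤ (1 + t ^ 2) ^ (-(a / 2)) :=
        Real.rpow_le_rpow_of_exponent_le (by nlinarith) (by linarith)
    _ ≤ (s ^ 2) ^ (-(a / 2)) :=
        Real.rpow_le_rpow_of_nonpos (by positivity) (by nlinarith) (by linarith)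
    _ = s ^ (-a) := by
        rw [← Real.rpow_natCast, ← Real.rpow_mul hs.le]; ring_nf

section SphereKernel

variable {E : Type*} [NormedAddCommGroup E] [NormedSpace ℝ E]

lemma norm_sub_le_of_norm_smul_normalize_sub_le {R t : ℝ} {w y : E} (hw : w ≠ 0)
    (hRw : R ≤ ‖w‖) (hwt : ‖w‖ ≤ R + t) (hcap : ‖R • (‖w‖⁻¹ • w) - y‖ ≤ t) :
    ‖w - y‖ ≤ 2 * t := by
  have hw' : 0 < ‖w‖ := norm_pos_iff.2 hw
  have hradial : ‖w - R • (‖w‖⁻¹ • w)‖ = ‖w‖ - R := by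
    have hsmul : w - R • (‖w‖⁻¹ • w) = (1 - R * ‖w‖⁻¹) • w := by
      rw [sub_smul, one_smul, smul_smul]
    rw [hsmul, norm_smul, Real.norm_eq_abs, abs_of_nonneg, sub_mul, mul_assoc,
      inv_mul_cancel₀ hw'.ne', one_mul, mul_one]
    rw [sub_nonneg, ← div_eq_mul_inv, div_le_one hw']
    exact hRw
  calc ‖w - y‖ ≤ ‖w - R • (‖w‖⁻¹ • w)‖ + ‖R • (‖w‖⁻¹ • w) - y‖ :=
        norm_sub_le_norm_sub_add_norm_sub ..
    _ ≤ 2 * t := by linarith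

lemma ofReal_pow_mul_le_volumeIoiPow (k : ℕ) {R : ℝ} (hR : 0 < R) (t : ℝ) :
    ENNReal.ofReal (R ^ k * t) ≤ Measure.volumeIoiPow k (Subtype.val ⁻¹' Ioc R (R + t)) := by
  rw [Measure.volumeIoiPow, withDensity_apply _ (measurable_subtype_coe measurableSet_Ioc),
    setLIntegral_subtype measurableSet_Ioi _ fun r : ℝ ↦ ENNReal.ofReal (r ^ k),
    Subtype.image_preimage_coe,
    inter_eq_right.2 (Ioc_subset_Ioi_self.trans (Ioi_subset_Ioi hR.le))]
  calc ENNReal.ofReal (R ^ k * t) = ∫⁻ _ in Ioc R (R + t), ENNReal.ofReal (R ^ k) := by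
        rw [setLIntegral_const, Real.volume_Ioc, add_sub_cancel_left,
          ← ENNReal.ofReal_mul (by positivity)]
    _ ≤ ∫⁻ r in Ioc R (R + t), ENNReal.ofReal (r ^ k) :=
        setLIntegral_mono (by fun_prop) fun r hr ↦
          ENNReal.ofReal_le_ofReal (pow_le_pow_left₀ hR.le hr.1.le k)

variable [MeasurableSpace E] [BorelSpace E]

lemma measurableSet_cap (R t : ℝ) (y : E) :
    MeasurableSet {u : sphere (0 : E) 1 | ‖R • (u : E) - y‖ ≤ t} :=
  (isClosed_le (by fun_prop) continuous_const).measurableSet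

lemma lintegral_toSphere_kernel_le_tsum (μ : Measure E) {γ : ℝ} (hγ : 0 ≤ γ) (R : ℝ) (y : E) :
    ∫⁻ u, ENNReal.ofReal ((1 + ‖R • (u : E) - y‖ ^ 2) ^ (-(γ / 2))) ∂μ.toSphere
      ≤ ∑' j : ℕ, ENNReal.ofReal (2 ^ γ * (2 ^ (-γ)) ^ j)
          * μ.toSphere {u | ‖R • (u : E) - y‖ ≤ 2 ^ j} := by
  set A : ℕ → Set (sphere (0 : E) 1) := fun j ↦ {u | ‖R • (u : E) - y‖ ≤ 2 ^ j}
  set c : ℕ → ℝ≥0∞ := fun j ↦ ENNReal.ofReal (2 ^ γ * (2 ^ (-γ)) ^ j)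
  have hpt : ∀ u : sphere (0 : E) 1,
      ENNReal.ofReal ((1 + ‖R • (u : E) - y‖ ^ 2) ^ (-(γ / 2)))
        ≤ ∑' j, (A j).indicator (fun _ ↦ c j) u := by
    intro u
    obtain ⟨j, hj, hK⟩ := one_add_sq_rpow_neg_le_dyadic hγ ‖R • (u : E) - y‖
    calc _ ≤ c j := ENNReal.ofReal_le_ofReal hK
      _ = (A j).indicator (fun _ ↦ c j) u :=
          (indicator_of_mem (show u ∈ A j from hj) fun _ ↦ c j).symm
      _ ≤ _ := ENNReal.le_tsum j
  calc ∫⁻ u, ENNReal.ofReal ((1 + ‖R • (u : E) - y‖ ^ 2) ^ (-(γ / 2))) ∂μ.toSphere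
      ≤ ∫⁻ u, ∑' j, (A j).indicator (fun _ ↦ c j) u ∂μ.toSphere := lintegral_mono hpt
    _ = ∑' j, c j * μ.toSphere (A j) := by
        rw [lintegral_tsum fun j ↦
          (measurable_const.indicator (measurableSet_cap R _ y)).aemeasurable]
        simp only [lintegral_indicator_const (measurableSet_cap R _ y)]
        rfl

variable [FiniteDimensional ℝ E] (μ : Measure E) [μ.IsAddHaarMeasure]

/-- A cap of radius `t` on the sphere of radius `R` spans, over the radii `(R, R + t]`, a piece
of cone of volume `≳ R ^ (n - 1) t` inside the ball `closedBall y (2 t)`. -/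
lemma toSphere_cap_mul_le {R : ℝ} (hR : 0 < R) (t : ℝ) (y : E) :
    μ.toSphere {u | ‖R • (u : E) - y‖ ≤ t} * ENNReal.ofReal (R ^ (finrank ℝ E - 1) * t)
      ≤ μ (closedBall y (2 * t)) := by
  set C : Set (sphere (0 : E) 1) := {u | ‖R • (u : E) - y‖ ≤ t}
  set S : Set (Ioi (0 : ℝ)) := Subtype.val ⁻¹' Ioc R (R + t)
  have hcone : Subtype.val '' (homeomorphUnitSphereProd E ⁻¹' C ×ˢ S) ⊆ closedBall y (2 * t) := by
    rintro _ ⟨w, ⟨hwC, hwS⟩, rfl⟩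
    rw [mem_closedBall, dist_eq_norm]
    have hw : R < ‖(w : E)‖ ∧ ‖(w : E)‖ ≤ R + t := by simpa [S] using hwS
    exact norm_sub_le_of_norm_smul_normalize_sub_le w.2 hw.1.le hw.2 (by simpa [C] using hwC)
  calc μ.toSphere C * ENNReal.ofReal (R ^ (finrank ℝ E - 1) * t)
      ≤ μ.toSphere C * Measure.volumeIoiPow (finrank ℝ E - 1) S := by
        gcongr; exact ofReal_pow_mul_le_volumeIoiPow _ hR t
    _ = μ.comap Subtype.val (homeomorphUnitSphereProd E ⁻¹' C ×ˢ S) := by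
        rw [(μ.measurePreserving_homeomorphUnitSphereProd).measure_preimage
          ((measurableSet_cap R t y).prod
            (measurable_subtype_coe measurableSet_Ioc)).nullMeasurableSet, Measure.prod_prod]
    _ = μ (Subtype.val '' (homeomorphUnitSphereProd E ⁻¹' C ×ˢ S)) :=
        comap_subtype_coe_apply (measurableSet_singleton 0).compl _ _
    _ ≤ μ (closedBall y (2 * t)) := measure_mono hcone

lemma toSphere_cap_le [Nontrivial E] {R t : ℝ} (hR : 0 < R) (ht : 0 < t) (y : E) :
    μ.toSphere {u | ‖R • (u : E) - y‖ ≤ t}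
      ≤ ENNReal.ofReal (2 ^ finrank ℝ E * (t / R) ^ (finrank ℝ E - 1)) * μ (closedBall 0 1) := by
  have hn : finrank ℝ E - 1 + 1 = finrank ℝ E := Nat.sub_add_cancel finrank_pos
  have hpos : ENNReal.ofReal (R ^ (finrank ℝ E - 1) * t) ≠ 0 := by
    rw [ENNReal.ofReal_ne_zero_iff]; positivity
  rw [← ENNReal.mul_le_mul_iff_left hpos ENNReal.ofReal_ne_top, mul_right_comm,
    ← ENNReal.ofReal_mul (by positivity)]
  refine (toSphere_cap_mul_le μ hR t y).trans_eq ?_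
  rw [μ.addHaar_closedBall' y (by positivity)]
  congr 2
  have ht' : t ^ finrank ℝ E = t ^ (finrank ℝ E - 1) * t := by rw [← pow_succ, hn]
  rw [div_pow, mul_pow, ht']
  field_simp

/-- The kernel is `≲ 2 ^ (-γ j)` outside the ball of radius `2 ^ (j - 1)` around `y`, which meets
the sphere of radius `R` in a cap of measure `≲ (2 ^ j / R) ^ (n - 1)`; the resulting geometric
series converges because `γ > n - 1`. -/
lemma lintegral_toSphere_kernel_le [Nontrivial E] {γ : ℝ} (hγ : (finrank ℝ E : ℝ) - 1 < γ) :
    ∃ C > 0, ∀ R > 0, ∀ y : E,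
      ∫⁻ u, ENNReal.ofReal ((1 + ‖R • (u : E) - y‖ ^ 2) ^ (-(γ / 2))) ∂μ.toSphere
        ≤ ENNReal.ofReal (C * R ^ (-((finrank ℝ E : ℝ) - 1))) := by
  set n := finrank ℝ E
  have hn : ((n - 1 : ℕ) : ℝ) = (n : ℝ) - 1 := by rw [Nat.cast_pred finrank_pos]
  have hγ0 : 0 ≤ γ := by linarith [(Nat.one_le_cast (α := ℝ)).2 (finrank_pos (R := ℝ) (M := E))]
  set q : ℝ := 2 ^ (-γ) * 2 ^ (n - 1)
  have hq0 : 0 ≤ q := by positivity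
  have hq1 : q < 1 := by
    rw [show q = 2 ^ (-γ) * 2 ^ (n - 1) from rfl, ← Real.rpow_natCast 2 (n - 1), hn,
      ← Real.rpow_add two_pos]
    exact Real.rpow_lt_one_of_one_lt_of_neg one_lt_two (by linarith)
  set V := μ.real (closedBall 0 1)
  have hV : 0 < V := ENNReal.toReal_pos (measure_closedBall_pos μ 0 one_pos).ne'
    measure_closedBall_lt_top.ne
  refine ⟨2 ^ γ * 2 ^ n * V / (1 - q), by have := sub_pos.2 hq1; positivity, fun R hR y ↦ ?_⟩
  set B := 2 ^ γ * 2 ^ n * V * R ^ (-((n : ℝ) - 1))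
  have hterm : ∀ j : ℕ, ENNReal.ofReal (2 ^ γ * (2 ^ (-γ)) ^ j)
      * μ.toSphere {u | ‖R • (u : E) - y‖ ≤ 2 ^ j} ≤ ENNReal.ofReal (B * q ^ j) := by
    intro j
    grw [toSphere_cap_le μ hR (by positivity) y, ← ofReal_measureReal measure_closedBall_lt_top.ne,
      ← ENNReal.ofReal_mul (by positivity), ← ENNReal.ofReal_mul (by positivity)]
    refine le_of_eq (congrArg _ ?_)
    simp only [B, q]
    rw [Real.rpow_neg hR.le, ← hn, Real.rpow_natCast, div_pow, ← pow_mul, mul_comm j, pow_mul]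
    field_simp
    ring
  calc _ ≤ _ := lintegral_toSphere_kernel_le_tsum μ hγ0 R y
    _ ≤ ∑' j, ENNReal.ofReal (B * q ^ j) := ENNReal.tsum_le_tsum hterm
    _ = ENNReal.ofReal (∑' j, B * q ^ j) :=
        (ENNReal.ofReal_tsum_of_nonneg (fun _ ↦ by positivity)
          ((summable_geometric_of_lt_one hq0 hq1).mul_left B)).symm
    _ = _ := by rw [tsum_mul_left, tsum_geometric_of_lt_one hq0 hq1]; congr 1; ring

lemma lintegral_toSphere_kernel_le_of_two_mul_le [Nontrivial E] {γ R : ℝ}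
    (hγ : (finrank ℝ E : ℝ) - 1 ≤ γ) (hR : 0 < R) {y : E} (hRy : 2 * R ≤ ‖y‖) :
    ∫⁻ u, ENNReal.ofReal ((1 + ‖R • (u : E) - y‖ ^ 2) ^ (-(γ / 2))) ∂μ.toSphere
      ≤ ENNReal.ofReal ((‖y‖ / 2) ^ (-((finrank ℝ E : ℝ) - 1)) * μ.toSphere.real univ) := by
  have hfar : ∀ u : sphere (0 : E) 1,
      ENNReal.ofReal ((1 + ‖R • (u : E) - y‖ ^ 2) ^ (-(γ / 2)))
        ≤ ENNReal.ofReal ((‖y‖ / 2) ^ (-((finrank ℝ E : ℝ) - 1))) := by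
    intro u
    have hRu : ‖R • (u : E)‖ = R := by
      rw [norm_smul, norm_eq_of_mem_sphere u, Real.norm_of_nonneg hR.le, mul_one]
    have hdist : ‖y‖ / 2 ≤ ‖R • (u : E) - y‖ := by
      have := norm_sub_norm_le y (R • (u : E))
      rw [hRu, norm_sub_rev] at this
      linarith
    exact ENNReal.ofReal_le_ofReal (one_add_sq_rpow_neg_le_rpow_neg (by linarith) hdist
      (sub_nonneg.2 (Nat.one_le_cast.2 finrank_pos)) hγ)
  calc _ ≤ ∫⁻ _, ENNReal.ofReal ((‖y‖ / 2) ^ (-((finrank ℝ E : ℝ) - 1))) ∂μ.toSphere :=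
        lintegral_mono hfar
    _ = _ := by rw [lintegral_const, ENNReal.ofReal_mul (by positivity), ofReal_measureReal]

lemma lintegral_toSphere_kernel_le_mul_rpow [Nontrivial E] {b γ : ℝ}
    (hb : b ≤ 0) (hnb : -((finrank ℝ E : ℝ) - 1) ≤ b) (hγ : (finrank ℝ E : ℝ) - 1 < γ) :
    ∃ C > 0, ∀ R > 0, ∀ y : E, y ≠ 0 →
      ∫⁻ u, ENNReal.ofReal ((1 + ‖R • (u : E) - y‖ ^ 2) ^ (-(γ / 2))) ∂μ.toSphere
        ≤ ENNReal.ofReal (C * R ^ (-((finrank ℝ E : ℝ) - 1 + b)) * ‖y‖ ^ b) := by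
  set a := (finrank ℝ E : ℝ) - 1
  obtain ⟨C₁, hC₁, hnear⟩ := lintegral_toSphere_kernel_le μ hγ
  set M := μ.toSphere.real univ
  have hM : 0 ≤ M := measureReal_nonneg
  refine ⟨(C₁ + M) * 2 ^ (-b), by positivity, fun R hR y hy ↦ ?_⟩
  set s := ‖y‖ / 2 with hs_def
  have hs : 0 < s := by positivity
  have hbound : ∫⁻ u, ENNReal.ofReal ((1 + ‖R • (u : E) - y‖ ^ 2) ^ (-(γ / 2))) ∂μ.toSphere
      ≤ ENNReal.ofReal ((C₁ + M) * (R ^ (-(a + b)) * s ^ b)) := by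
    rcases le_total s R with hsR | hRs
    · refine (hnear R hR y).trans (ENNReal.ofReal_le_ofReal ?_)
      exact mul_le_mul (by linarith) (rpow_neg_le_mul_rpow_of_le hs hsR hb) (by positivity)
        (by positivity)
    · refine (lintegral_toSphere_kernel_le_of_two_mul_le μ hγ.le hR (by linarith)).trans
        (ENNReal.ofReal_le_ofReal ?_)
      rw [mul_comm]
      exact mul_le_mul (by linarith) (rpow_neg_le_mul_rpow_of_ge hR hRs (by linarith))
        (by positivity) (by positivity)
  convert hbound using 2
  rw [Real.div_rpow (norm_nonneg y) zero_le_two, Real.rpow_neg zero_le_two]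
  field_simp

end SphereKernel

section RadialAveraging

variable {E : Type*} [NormedAddCommGroup E] [InnerProductSpace ℝ E] [FiniteDimensional ℝ E]
  [MeasurableSpace E] [BorelSpace E]

lemma lintegral_mul_comp_norm_sub_eq_of_norm_eq {g : E → ℝ≥0∞}
    (hg : ∀ y z, ‖y‖ = ‖z‖ → g y = g z) (k : ℝ → ℝ≥0∞) {x z : E} (h : ‖x‖ = ‖z‖) :
    ∫⁻ y, g y * k ‖z - y‖ = ∫⁻ y, g y * k ‖x - y‖ := by
  set e : E ≃ₗᵢ[ℝ] E := Submodule.reflection (ℝ ∙ (x - z))ᗮ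
  have hex : e x = z := Submodule.reflection_sub h
  calc ∫⁻ y, g y * k ‖z - y‖ = ∫⁻ y, g (e y) * k ‖z - e y‖ :=
        (e.measurePreserving.lintegral_comp_emb e.toHomeomorph.measurableEmbedding _).symm
    _ = ∫⁻ y, g y * k ‖x - y‖ := by
        refine lintegral_congr fun y ↦ ?_
        rw [hg _ _ (e.norm_map y), ← hex, ← map_sub, e.norm_map]

lemma lintegral_mul_comp_norm_sub_mul_toSphere_univ {g : E → ℝ≥0∞}
    (hg : ∀ y z, ‖y‖ = ‖z‖ → g y = g z) (hgm : AEMeasurable g) {k : ℝ → ℝ≥0∞}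
    (hk : Measurable k) (x : E) :
    (∫⁻ y, g y * k ‖x - y‖) * (volume : Measure E).toSphere univ
      = ∫⁻ y, g y * ∫⁻ u, k ‖‖x‖ • (u : E) - y‖ ∂(volume : Measure E).toSphere := by
  calc (∫⁻ y, g y * k ‖x - y‖) * (volume : Measure E).toSphere univ
      = ∫⁻ u : sphere (0 : E) 1, (∫⁻ y, g y * k ‖‖x‖ • (u : E) - y‖)
          ∂(volume : Measure E).toSphere := by
        rw [← lintegral_const]
        refine lintegral_congr fun u ↦ (lintegral_mul_comp_norm_sub_eq_of_norm_eq hg k ?_).symm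
        rw [norm_smul, norm_eq_of_mem_sphere u, norm_norm, mul_one]
    _ = ∫⁻ y, ∫⁻ u : sphere (0 : E) 1, g y * k ‖‖x‖ • (u : E) - y‖
          ∂(volume : Measure E).toSphere :=
        lintegral_lintegral_swap (hgm.comp_snd.mul (hk.comp (by fun_prop)).aemeasurable)
    _ = ∫⁻ y, g y * ∫⁻ u, k ‖‖x‖ • (u : E) - y‖ ∂(volume : Measure E).toSphere :=
        lintegral_congr fun y ↦ lintegral_const_mul _ (hk.comp (by fun_prop))

lemma lintegral_mul_comp_norm_sub_mul_toSphere_univ_le [Nontrivial E] {g : E → ℝ≥0∞}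
    (hg : ∀ y z, ‖y‖ = ‖z‖ → g y = g z) (hgm : AEMeasurable g) {k : ℝ → ℝ≥0∞}
    (hk : Measurable k) {x : E} {B : ℝ≥0∞} (hB : B ≠ ∞) {w : E → ℝ≥0∞}
    (hkw : ∀ y ≠ 0, ∫⁻ u, k ‖‖x‖ • (u : E) - y‖ ∂(volume : Measure E).toSphere ≤ B * w y) :
    (∫⁻ y, g y * k ‖x - y‖) * (volume : Measure E).toSphere univ ≤ B * ∫⁻ y, w y * g y := by
  rw [lintegral_mul_comp_norm_sub_mul_toSphere_univ hg hgm hk, ← lintegral_const_mul' _ _ hB]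
  refine lintegral_mono_ae ?_
  filter_upwards [measure_eq_zero_iff_ae_notMem.1 (measure_singleton (0 : E))] with y hy
  grw [hkw y hy]
  exact (mul_comm _ _).trans_le (mul_assoc _ _ _).le

end RadialAveraging

theorem abs_integral_mul_one_add_sq_rpow_neg_le_of_radial {E : Type*} [NormedAddCommGroup E]
    [InnerProductSpace ℝ E] [FiniteDimensional ℝ E] [Nontrivial E] [MeasurableSpace E]
    [BorelSpace E] {b γ : ℝ} (hb : b ≤ 0) (hnb : -((finrank ℝ E : ℝ) - 1) ≤ b)
    (hγ : (finrank ℝ E : ℝ) - 1 < γ) :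
    ∃ C > 0, ∀ f : E → ℝ, AEStronglyMeasurable f volume →
      (∀ x y : E, ‖x‖ = ‖y‖ → f x = f y) → Integrable (fun y ↦ ‖y‖ ^ b * |f y|) volume →
      ∀ x : E, x ≠ 0 →
        |∫ y, f y * (1 + ‖x - y‖ ^ 2) ^ (-(γ / 2))|
          ≤ C * ‖x‖ ^ (-((finrank ℝ E : ℝ) - 1 + b)) * ∫ y, ‖y‖ ^ b * |f y| := by
  obtain ⟨C₀, hC₀, hker⟩ := lintegral_toSphere_kernel_le_mul_rpow (volume : Measure E) hb hnb hγ
  set m := (volume : Measure E).toSphere.real univ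
  have hm : 0 < m := by
    have : NeZero (volume : Measure E).toSphere := ⟨Measure.toSphere_ne_zero _⟩
    exact measureReal_univ_pos
  refine ⟨C₀ / m, by positivity, fun f hf hrad hint x hx ↦ ?_⟩
  set B := C₀ * ‖x‖ ^ (-((finrank ℝ E : ℝ) - 1 + b))
  set W := ∫ y, ‖y‖ ^ b * |f y|
  set Φ := ∫⁻ y, ENNReal.ofReal |f y| * ENNReal.ofReal ((1 + ‖x - y‖ ^ 2) ^ (-(γ / 2)))
  have habs : |∫ y, f y * (1 + ‖x - y‖ ^ 2) ^ (-(γ / 2))| ≤ Φ.toReal := by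
    refine (norm_integral_le_lintegral_norm (μ := volume)
      fun y ↦ f y * (1 + ‖x - y‖ ^ 2) ^ (-(γ / 2))).trans_eq
        (congrArg _ (lintegral_congr fun y ↦ ?_))
    rw [Real.norm_eq_abs, abs_mul, ENNReal.ofReal_mul (abs_nonneg _),
      abs_of_nonneg (by positivity : (0 : ℝ) ≤ (1 + ‖x - y‖ ^ 2) ^ (-(γ / 2)))]
  have hΦ : Φ * ENNReal.ofReal m ≤ ENNReal.ofReal B * ENNReal.ofReal W := by
    rw [ofReal_measureReal (measure_ne_top _ _), ofReal_integral_eq_lintegral_ofReal hint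
      (.of_forall fun y ↦ by positivity)]
    refine (lintegral_mul_comp_norm_sub_mul_toSphere_univ_le (x := x)
      (k := fun s ↦ ENNReal.ofReal ((1 + s ^ 2) ^ (-(γ / 2)))) (fun y z h ↦ by rw [hrad y z h])
      hf.aemeasurable.abs.ennreal_ofReal (by fun_prop) ENNReal.ofReal_ne_top
      fun y hy ↦ (hker _ (norm_pos_iff.2 hx) y hy).trans_eq
        (ENNReal.ofReal_mul (by positivity))).trans_eq ?_
    simp_rw [ENNReal.ofReal_mul (Real.rpow_nonneg (norm_nonneg _) b)]
    rfl
  have hconv : Φ ≤ ENNReal.ofReal (B * W / m) := by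
    rw [ENNReal.ofReal_div_of_pos hm, ENNReal.ofReal_mul (by positivity),
      ENNReal.le_div_iff_mul_le (.inl (by simpa using hm)) (.inl ENNReal.ofReal_ne_top)]
    exact hΦ
  calc |∫ y, f y * (1 + ‖x - y‖ ^ 2) ^ (-(γ / 2))| ≤ B * W / m :=
        habs.trans (ENNReal.toReal_le_of_le_ofReal (by positivity) hconv)
    _ = C₀ / m * ‖x‖ ^ (-((finrank ℝ E : ℝ) - 1 + b)) * W := by ring

/-- Lemma `l.dN1`: weighted convolution estimate against the kernel
`(1+|x-y|²)^{-γ/2}` for radial `f`. -/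
theorem statement14 (d : ℕ) (hd : 2 ≤ d) (b γ : ℝ)
    (hb1 : -(d : ℝ) + 1 < b) (hb2 : b < 0) (hγ : (d : ℝ) - 1 < γ) :
    ∃ C : ℝ, 0 < C ∧
      ∀ f : Ed d → ℝ, AEStronglyMeasurable f volume →
        (∀ x y : Ed d, ‖x‖ = ‖y‖ → f x = f y) →
        Integrable (fun y : Ed d => ‖y‖ ^ b * |f y|) volume →
        ∀ x : Ed d, x ≠ 0 →
          |∫ y : Ed d, f y * (1 + ‖x - y‖ ^ 2) ^ (-(γ / 2))| ≤
            C * ‖x‖ ^ (-((d : ℝ) - 1 + b)) * ∫ y : Ed d, ‖y‖ ^ b * |f y| := by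
  have hdim : (finrank ℝ (Ed d) : ℝ) = d := by rw [finrank_euclideanSpace_fin]
  have : Nontrivial (Ed d) := by
    have : Nonempty (Fin d) := ⟨⟨0, by omega⟩⟩
    infer_instance
  rw [← hdim] at hb1 hγ ⊢
  exact abs_integral_mul_one_add_sq_rpow_neg_le_of_radial hb2.le (by linarith) hγ
end
end
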